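/- arXiv:1410.2420 — 4 statements merged into one kernel-verified Lean document; each statement's English description precedes it below -/
import Mathlib

section
/- Let p ≥ 11 be a prime and let a, b, c be nonzero elements of O_K, coprime in O_K, with a^p + b^p + c^p = 0. Suppose 2 divides a and 2 does not divide b·c. Set A = a^p, B = b^p, C = c^p, and let v denote the valuation on O_K attached to the prime ideal 2·O_K. Then v(16·(A² + A·B + B²)) = 4, v(−32·(A − B)·(B − C)·(C − A)) = 6, and v(16·(A·B·C)²) ≥ 26. -/
/-!
The prime `2` is inert in `ℚ(√5)`: `O_K ⧸ 2` has `2 ^ [K : ℚ] = 4` elements and contains the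
reduction of the golden ratio, a root of `x² + x + 1`, so it is the field with four elements.
With `2` prime in `O_K`, everything is parity: `2 ^ 11 ∣ A` while `B` and `C = -A - B` are odd, so
`c₄ = 2⁴ (A (A + B) + B²)` and `c₆ = 2⁶ · (product of three odd factors)`, and `2 ^ 22 ∣ A²`.
-/

open Polynomial

/-- `K = ℚ(√5)`, the real quadratic field obtained by adjoining `√5` to `ℚ`. -/
noncomputable def K : IntermediateField ℚ ℝ := IntermediateField.adjoin ℚ {Real.sqrt 5}

/-- `O_K`, the ring of integers of `K = ℚ(√5)`. -/
noncomputable abbrev OK : Type := NumberField.RingOfIntegers K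

theorem isField_of_card_eq_four_of_sq_eq_add_one {R : Type*} [CommRing R] [Finite R] {t : R}
    (hcard : Nat.card R = 4) (h2 : (2 : R) = 0) (ht : t ^ 2 = t + 1) : IsField R := by
  classical
  have : Fintype R := Fintype.ofFinite R
  have : Nontrivial R := Finite.one_lt_card_iff_nontrivial.mp (by omega)
  have ht_unit : IsUnit t := .of_mul_eq_one (t + 1) (by linear_combination ht + t * h2)
  have ht1_unit : IsUnit (t + 1) := .of_mul_eq_one t (by linear_combination ht + t * h2)
  have h1t : (1 : R) ≠ t := fun h => ht1_unit.ne_zero (by linear_combination h2 - h)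
  have h1t1 : (1 : R) ≠ t + 1 := fun h => ht_unit.ne_zero (by linear_combination -h)
  have htt1 : t ≠ t + 1 := fun h => one_ne_zero (by linear_combination -h)
  have huniv : ({0, 1, t, t + 1} : Finset R) = Finset.univ := by
    refine Finset.eq_univ_of_card _ ?_
    rw [Finset.card_insert_of_notMem (by simp [ht_unit.ne_zero.symm, ht1_unit.ne_zero.symm]),
      Finset.card_insert_of_notMem (by simp [h1t, h1t1]),
      Finset.card_insert_of_notMem (by simp [htt1]), Finset.card_singleton,
      Fintype.card_eq_nat_card, hcard]
  refine ⟨exists_pair_ne R, mul_comm, fun {x} hx => ?_⟩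
  have hx' : x ∈ ({0, 1, t, t + 1} : Finset R) := huniv ▸ Finset.mem_univ x
  simp only [Finset.mem_insert, Finset.mem_singleton] at hx'
  obtain rfl | rfl | rfl | rfl := hx'
  exacts [absurd rfl hx, ⟨1, one_mul 1⟩, ht_unit.exists_right_inv, ht1_unit.exists_right_inv]

theorem isIntegral_sqrt_five : IsIntegral ℚ √5 :=
  ⟨X ^ 2 - C 5, monic_X_pow_sub_C _ two_ne_zero, by simp⟩

theorem minpoly_sqrt_five : minpoly ℚ √5 = X ^ 2 - C 5 := by
  have h5 : ¬ IsSquare (5 : ℚ) := by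
    rw [← irrational_sqrt_ratCast_iff_of_nonneg (by norm_num)]
    exact_mod_cast Nat.prime_five.irrational_sqrt
  refine (minpoly.eq_of_irreducible_of_monic ?_ (by simp) (monic_X_pow_sub_C _ two_ne_zero)).symm
  exact X_pow_sub_C_irreducible_of_prime Nat.prime_two fun b hb => h5 ⟨b, by rw [← hb, sq]⟩

instance : NumberField K where
  to_finiteDimensional := IntermediateField.adjoin.finiteDimensional isIntegral_sqrt_five

theorem finrank_K : Module.finrank ℚ K = 2 := by
  rw [K, IntermediateField.adjoin.finrank isIntegral_sqrt_five, minpoly_sqrt_five]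
  simp

theorem goldenRatio_mem_K : Real.goldenRatio ∈ K := by
  have hsqrt : √5 ∈ K := IntermediateField.subset_adjoin ℚ _ rfl
  rw [Real.goldenRatio]
  exact div_mem (add_mem (one_mem K) hsqrt) (ofNat_mem K 2)

noncomputable def goldenRatioOK : OK :=
  ⟨⟨Real.goldenRatio, goldenRatio_mem_K⟩, X ^ 2 - X - 1, by monicity!, by
    ext
    simp [Real.goldenRatio_sq]⟩

theorem goldenRatioOK_sq : goldenRatioOK ^ 2 = goldenRatioOK + 1 := by
  refine NumberField.RingOfIntegers.ext (Subtype.ext ?_)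
  push_cast
  exact Real.goldenRatio_sq

theorem card_quotient_span_two : Nat.card (OK ⧸ Ideal.span {(2 : OK)}) = 4 := by
  rw [← Submodule.cardQuot_apply, ← Ideal.absNorm_apply]
  have h := Ideal.absNorm_span_natCast (S := OK) 2
  rw [NumberField.RingOfIntegers.rank, finrank_K] at h
  exact_mod_cast h

theorem prime_two_OK : Prime (2 : OK) := by
  have : Finite (OK ⧸ Ideal.span {(2 : OK)}) :=
    Nat.finite_of_card_ne_zero (by rw [card_quotient_span_two]; norm_num)
  have hfield : IsField (OK ⧸ Ideal.span {(2 : OK)}) := by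
    refine isField_of_card_eq_four_of_sq_eq_add_one card_quotient_span_two ?_
      (t := Ideal.Quotient.mk _ goldenRatioOK) ?_
    · exact Ideal.Quotient.eq_zero_iff_mem.mpr (Ideal.mem_span_singleton_self 2)
    · rw [← map_pow, goldenRatioOK_sq, map_add, map_one]
  exact (Ideal.span_singleton_prime two_ne_zero).mp
    (Ideal.Quotient.maximal_of_isField _ hfield).isPrime

theorem pow_dvd_pow_mul_and_not_pow_succ_dvd {R : Type*} [CommMonoidWithZero R]
    [IsCancelMulZero R] {π u : R} (hπ : π ≠ 0) (hu : ¬ π ∣ u) (n : ℕ) :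
    π ^ n ∣ π ^ n * u ∧ ¬ π ^ (n + 1) ∣ π ^ n * u := by
  refine ⟨dvd_mul_right _ _, fun h => hu ?_⟩
  rwa [pow_succ, mul_dvd_mul_iff_left (pow_ne_zero n hπ)] at h

section FreyCurve

variable {R : Type*} [CommRing R]

-- `c₄`, `c₆` and `Δ` of `y² = x (x - A) (x + B)`, where `A + B + C = 0`.
def freyC4 (A B : R) : R := 16 * (A ^ 2 + A * B + B ^ 2)

def freyC6 (A B C : R) : R := -32 * (A - B) * (B - C) * (C - A)

def freyDisc (A B C : R) : R := 16 * (A * B * C) ^ 2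

variable {A B C : R}

theorem two_pow_twentysix_dvd_freyDisc (hA : 2 ^ 11 ∣ A) : (2 : R) ^ 26 ∣ freyDisc A B C := by
  obtain ⟨A', rfl⟩ := hA
  exact ⟨A' ^ 2 * (B * C) ^ 2, by unfold freyDisc; ring⟩

variable [IsDomain R]

theorem two_pow_four_exactly_dvd_freyC4 (h2 : Prime (2 : R)) (hA : 2 ∣ A) (hB : ¬ 2 ∣ B) :
    (2 : R) ^ 4 ∣ freyC4 A B ∧ ¬ (2 : R) ^ 5 ∣ freyC4 A B := by
  have hodd : ¬ 2 ∣ A * (A + B) + B ^ 2 :=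
    (dvd_add_right (hA.mul_right _)).not.mpr fun h => hB (h2.dvd_of_dvd_pow h)
  have hC4 : freyC4 A B = 2 ^ 4 * (A * (A + B) + B ^ 2) := by unfold freyC4; ring
  exact hC4 ▸ pow_dvd_pow_mul_and_not_pow_succ_dvd h2.ne_zero hodd 4

theorem two_pow_six_exactly_dvd_freyC6 (h2 : Prime (2 : R)) (hABC : A + B + C = 0)
    (hA : 4 ∣ A) (hB : ¬ 2 ∣ B) :
    (2 : R) ^ 6 ∣ freyC6 A B C ∧ ¬ (2 : R) ^ 7 ∣ freyC6 A B C := by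
  obtain ⟨A', rfl⟩ := hA
  obtain rfl : C = -(4 * A') - B := by linear_combination hABC
  have hodd (k : R) : ¬ 2 ∣ B + 2 * k := fun h => hB ((dvd_add_left (dvd_mul_right 2 k)).mp h)
  have hprod : ¬ 2 ∣ (B + 2 * (-2 * A')) * (B + 2 * A') * (B + 2 * (4 * A')) := by
    simp only [h2.dvd_mul, not_or]
    exact ⟨⟨hodd _, hodd _⟩, hodd _⟩
  have hC6 : freyC6 (4 * A') B (-(4 * A') - B) =
      2 ^ 6 * -((B + 2 * (-2 * A')) * (B + 2 * A') * (B + 2 * (4 * A'))) := by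
    unfold freyC6; ring
  exact hC6 ▸ pow_dvd_pow_mul_and_not_pow_succ_dvd h2.ne_zero (dvd_neg.not.mpr hprod) 6

end FreyCurve

theorem valuations_at_P2_even_case_general (p : ℕ) (hp11 : 11 ≤ p)
    (a b c : OK)
    (hfermat : a ^ p + b ^ p + c ^ p = 0)
    (h2a : (2 : OK) ∣ a) (h2bc : ¬ (2 : OK) ∣ b * c)
    (A B C : OK) (hA : A = a ^ p) (hB : B = b ^ p) (hC : C = c ^ p) :
    ((2 : OK) ^ 4 ∣ 16 * (A ^ 2 + A * B + B ^ 2) ∧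
      ¬ (2 : OK) ^ 5 ∣ 16 * (A ^ 2 + A * B + B ^ 2)) ∧
    ((2 : OK) ^ 6 ∣ -32 * (A - B) * (B - C) * (C - A) ∧
      ¬ (2 : OK) ^ 7 ∣ -32 * (A - B) * (B - C) * (C - A)) ∧
    (2 : OK) ^ 26 ∣ 16 * (A * B * C) ^ 2 := by
  subst hA hB hC
  have h2A : (2 : OK) ^ 11 ∣ a ^ p := (pow_dvd_pow 2 hp11).trans (pow_dvd_pow_of_dvd h2a p)
  have h4A : (4 : OK) ∣ a ^ p := by
    rw [show (4 : OK) = 2 ^ 2 by norm_num]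
    exact (pow_dvd_pow 2 (by norm_num)).trans h2A
  have h2B : ¬ (2 : OK) ∣ b ^ p := fun h => h2bc ((prime_two_OK.dvd_of_dvd_pow h).mul_right c)
  exact ⟨two_pow_four_exactly_dvd_freyC4 prime_two_OK (dvd_pow h2a (by omega)) h2B,
    two_pow_six_exactly_dvd_freyC6 prime_two_OK hfermat h4A h2B,
    two_pow_twentysix_dvd_freyDisc h2A⟩

set_option maxHeartbeats 1000000 in
/-- **Lemma 3 (1), computation.** Let `p ≥ 11` be prime and `a, b, c` nonzero
coprime elements of `O_K` with `a^p + b^p + c^p = 0`, `2 ∣ a` and `2 ∤ b·c`.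
With `A = a^p`, `B = b^p`, `C = c^p` and `v` the valuation attached to the prime
ideal `2·O_K` (so `v(x) = n` iff `2^n ∣ x` and `2^(n+1) ∤ x`), one has
`v(c₄) = 4`, `v(c₆) = 6` and `v(Δ) ≥ 26`, where `c₄ = 16(A² + AB + B²)`,
`c₆ = -32(A - B)(B - C)(C - A)` and `Δ = 16(ABC)²`. -/
theorem valuations_at_P2_even_case (p : ℕ) (hp : p.Prime) (hp11 : 11 ≤ p)
    (a b c : OK) (ha : a ≠ 0) (hb : b ≠ 0) (hc : c ≠ 0)
    (hcop : ∀ d : OK, d ∣ a → d ∣ b → d ∣ c → IsUnit d)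
    (hfermat : a ^ p + b ^ p + c ^ p = 0)
    (h2a : (2 : OK) ∣ a) (h2bc : ¬ (2 : OK) ∣ b * c)
    (A B C : OK) (hA : A = a ^ p) (hB : B = b ^ p) (hC : C = c ^ p) :
    ((2 : OK) ^ 4 ∣ 16 * (A ^ 2 + A * B + B ^ 2) ∧
      ¬ (2 : OK) ^ 5 ∣ 16 * (A ^ 2 + A * B + B ^ 2)) ∧
    ((2 : OK) ^ 6 ∣ -32 * (A - B) * (B - C) * (C - A) ∧
      ¬ (2 : OK) ^ 7 ∣ -32 * (A - B) * (B - C) * (C - A)) ∧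
    (2 : OK) ^ 26 ∣ 16 * (A * B * C) ^ 2 :=
  valuations_at_P2_even_case_general p hp11 a b c hfermat h2a h2bc A B C hA hB hC
end

section
/- Let p ≥ 11 be a prime and let a, b, c be nonzero elements of O_K, coprime in O_K, with a^p + b^p + c^p = 0 and with 2 not dividing a·b·c. Set A = a^p, B = b^p, C = c^p, and suppose the pair (A mod 4, B mod 4) is one of (3, u²), (1, u), (1, u² + 2u) modulo 4·O_K. Let v denote the valuation on O_K attached to the prime ideal 2·O_K. Then v(16·(A² + A·B + B²)) = 5, v(−32·(A − B)·(B − C)·(C − A)) = 5, and v(16·(A·B·C)²) = 4. -/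
/-!
Everything is read off congruences modulo `2` and `4`. Modulo `2` one has `A ≡ 1` and
`B ≡ u` or `u²`, so `C = -A - B` gives `ABC ≡ u³`, a unit; and since `A + B + C = 0`,
`(A - B)(B - C)(C - A) ≡ ABC`. Modulo `4`, `A² + AB + B²` is twice a unit. Primality of `2`
in `O_K` is never needed: being congruent to a unit modulo `2` already excludes divisibility
by `2`, because `2` is not a unit of `O_K`.
-/

open Polynomial

lemma sqrt5_mem : Real.sqrt 5 ∈ K :=
  IntermediateField.subset_adjoin ℚ {Real.sqrt 5} rfl

/-- `(1 + √5)/2` as an element of `K`. -/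
noncomputable def uK : K :=
  ⟨(1 + Real.sqrt 5) / 2,
    div_mem (add_mem (one_mem K) sqrt5_mem)
      (by exact_mod_cast SubfieldClass.ratCast_mem K 2)⟩

lemma uK_integral : IsIntegral ℤ uK := by
  have h : IsIntegral ℤ ((1 + Real.sqrt 5) / 2 : ℝ) := by
    refine ⟨X ^ 2 - X - 1, by monicity!, ?_⟩
    have h5 : Real.sqrt 5 ^ 2 = 5 := Real.sq_sqrt (by norm_num)
    simp only [eval₂_sub, eval₂_pow, eval₂_X, eval₂_one]
    nlinarith [h5]
  rw [show ((1 + Real.sqrt 5) / 2 : ℝ) = algebraMap K ℝ uK from rfl] at h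
  exact (isIntegral_algebraMap_iff (algebraMap K ℝ).injective).mp h

/-- `u = (1 + √5)/2` as an element of `O_K`; it satisfies `u ^ 2 = 1 + u`. -/
noncomputable def u : OK := ⟨uK, uK_integral⟩

section
variable {R : Type*} [CommRing R]

theorem mk_span_singleton_eq_of_dvd_sub {n x y : R} (h : n ∣ x - y) :
    Ideal.Quotient.mk (Ideal.span {n}) x = Ideal.Quotient.mk (Ideal.span {n}) y :=
  (Ideal.Quotient.mk_eq_mk_iff_sub_mem x y).mpr (Ideal.mem_span_singleton.mpr h)

theorem not_dvd_of_dvd_sub_of_isUnit {π x w : R} (hπ : ¬IsUnit π) (hw : IsUnit w)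
    (h : π ∣ x - w) : ¬π ∣ x := fun hx ↦
  hπ (isUnit_of_dvd_unit (by simpa using dvd_sub hx h) hw)

theorem two_dvd_sub_mul_mul_of_add_eq_zero {A B C : R} (h : A + B + C = 0) :
    2 ∣ (A - B) * (B - C) * (C - A) - A * B * C := by
  obtain rfl : C = -A - B := by linear_combination h
  exact ⟨-A ^ 3 - A ^ 2 * B + 2 * A * B ^ 2 + B ^ 3, by ring⟩

variable [IsDomain R] {π : R}

theorem dvd_and_not_sq_dvd_of_sq_dvd_sub_mul {x w : R} (hπ : ¬IsUnit π) (hπ0 : π ≠ 0)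
    (hw : IsUnit w) (h : π ^ 2 ∣ x - π * w) : π ∣ x ∧ ¬π ^ 2 ∣ x := by
  have hπx : π ∣ x := by
    simpa using dvd_add ((dvd_pow_self π two_ne_zero).trans h) (dvd_mul_right π w)
  refine ⟨hπx, fun hx ↦ hπ (isUnit_of_dvd_unit ?_ hw)⟩
  rw [← mul_dvd_mul_iff_left hπ0, ← sq]
  simpa using dvd_sub hx h

theorem pow_add_dvd_pow_mul_and_not_dvd {k : ℕ} {x : R} (hπ0 : π ≠ 0) (n : ℕ)
    (h : π ^ k ∣ x ∧ ¬π ^ (k + 1) ∣ x) :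
    π ^ (n + k) ∣ π ^ n * x ∧ ¬π ^ (n + k + 1) ∣ π ^ n * x := by
  rwa [add_assoc, pow_add, pow_add, mul_dvd_mul_iff_left (pow_ne_zero n hπ0),
    mul_dvd_mul_iff_left (pow_ne_zero n hπ0)]

end

theorem u_sq : u ^ 2 = 1 + u := by
  have h5 : Real.sqrt 5 ^ 2 = 5 := Real.sq_sqrt (by norm_num)
  apply NumberField.RingOfIntegers.ext
  apply Subtype.ext
  show ((1 + Real.sqrt 5) / 2) ^ 2 = 1 + (1 + Real.sqrt 5) / 2
  linear_combination h5 / 4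

theorem isUnit_u : IsUnit u :=
  .of_mul_eq_one (u - 1) (by linear_combination u_sq)

/-- `ℤ → O_K` is an integral extension, so it reflects units. -/
theorem not_isUnit_two : ¬IsUnit (2 : OK) := by
  rw [← map_ofNat (algebraMap ℤ OK) 2, isUnit_map_iff]
  decide

theorem sq_add_mul_add_sq_mod_four {A B : OK}
    (hAB : ((4 : OK) ∣ A - 3 ∧ (4 : OK) ∣ B - u ^ 2) ∨
      ((4 : OK) ∣ A - 1 ∧ (4 : OK) ∣ B - u) ∨
      ((4 : OK) ∣ A - 1 ∧ (4 : OK) ∣ B - (u ^ 2 + 2 * u))) :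
    ∃ w : OK, IsUnit w ∧ (4 : OK) ∣ A ^ 2 + A * B + B ^ 2 - 2 * w := by
  -- `A² + AB + B²` is `2u²`, `2u²`, `2u` modulo `4` in the three cases.
  rcases hAB with ⟨hA, hB⟩ | ⟨hA, hB⟩ | ⟨hA, hB⟩ <;>
    [refine ⟨u ^ 2, isUnit_u.pow 2, ?_⟩; refine ⟨u ^ 2, isUnit_u.pow 2, ?_⟩;
      refine ⟨u, isUnit_u, ?_⟩]
  all_goals
    rw [← Ideal.Quotient.eq_zero_iff_dvd]
    have h4 := (Ideal.Quotient.eq_zero_iff_dvd (4 : OK) 4).mpr dvd_rfl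
    have hu := congrArg (Ideal.Quotient.mk (Ideal.span {(4 : OK)})) u_sq
    simp only [map_sub, map_add, map_mul, map_pow, map_one, map_ofNat,
      mk_span_singleton_eq_of_dvd_sub hA, mk_span_singleton_eq_of_dvd_sub hB] at hu h4 ⊢
    grind

theorem mul_mul_mod_two {A B C : OK} (hsum : A + B + C = 0)
    (hAB : ((4 : OK) ∣ A - 3 ∧ (4 : OK) ∣ B - u ^ 2) ∨
      ((4 : OK) ∣ A - 1 ∧ (4 : OK) ∣ B - u) ∨
      ((4 : OK) ∣ A - 1 ∧ (4 : OK) ∣ B - (u ^ 2 + 2 * u))) :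
    (2 : OK) ∣ A * B * C - u ^ 3 := by
  obtain rfl : C = -A - B := by linear_combination hsum
  have h24 : (2 : OK) ∣ 4 := ⟨2, by norm_num⟩
  rw [← Ideal.Quotient.eq_zero_iff_dvd]
  have h2 := (Ideal.Quotient.eq_zero_iff_dvd (2 : OK) 2).mpr dvd_rfl
  have hu := congrArg (Ideal.Quotient.mk (Ideal.span {(2 : OK)})) u_sq
  rcases hAB with ⟨hA, hB⟩ | ⟨hA, hB⟩ | ⟨hA, hB⟩
  all_goals
    simp only [map_sub, map_add, map_mul, map_pow, map_one, map_ofNat, map_neg,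
      mk_span_singleton_eq_of_dvd_sub (h24.trans hA),
      mk_span_singleton_eq_of_dvd_sub (h24.trans hB)] at hu h2 ⊢
    grind

theorem valuations_at_P2_odd_case_two_general (p : ℕ)
    (a b c : OK)
    (hfermat : a ^ p + b ^ p + c ^ p = 0)
    (A B C : OK) (hA : A = a ^ p) (hB : B = b ^ p) (hC : C = c ^ p)
    (hAB : ((4 : OK) ∣ A - 3 ∧ (4 : OK) ∣ B - u ^ 2) ∨
      ((4 : OK) ∣ A - 1 ∧ (4 : OK) ∣ B - u) ∨
      ((4 : OK) ∣ A - 1 ∧ (4 : OK) ∣ B - (u ^ 2 + 2 * u))) :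
    ((2 : OK) ^ 5 ∣ 16 * (A ^ 2 + A * B + B ^ 2) ∧
      ¬ (2 : OK) ^ 6 ∣ 16 * (A ^ 2 + A * B + B ^ 2)) ∧
    ((2 : OK) ^ 5 ∣ -32 * (A - B) * (B - C) * (C - A) ∧
      ¬ (2 : OK) ^ 6 ∣ -32 * (A - B) * (B - C) * (C - A)) ∧
    ((2 : OK) ^ 4 ∣ 16 * (A * B * C) ^ 2 ∧
      ¬ (2 : OK) ^ 5 ∣ 16 * (A * B * C) ^ 2) := by
  have hsum : A + B + C = 0 := by rw [hA, hB, hC, hfermat]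
  have h2 : (2 : OK) ≠ 0 := two_ne_zero
  obtain ⟨w, hw, hS⟩ := sq_add_mul_add_sq_mod_four hAB
  have hABC : (2 : OK) ∣ A * B * C - u ^ 3 := mul_mul_mod_two hsum hAB
  have hP : (2 : OK) ∣ (A - B) * (B - C) * (C - A) - u ^ 3 := by
    simpa using dvd_add (two_dvd_sub_mul_mul_of_add_eq_zero hsum) hABC
  have hABC2 : (2 : OK) ∣ (A * B * C) ^ 2 - (u ^ 3) ^ 2 := by
    rw [sq_sub_sq]
    exact dvd_mul_of_dvd_right hABC _
  refine ⟨?_, ?_, ?_⟩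
  · rw [show (16 : OK) = 2 ^ 4 by norm_num]
    refine pow_add_dvd_pow_mul_and_not_dvd h2 4 (k := 1) ?_
    rw [pow_one]
    exact dvd_and_not_sq_dvd_of_sq_dvd_sub_mul not_isUnit_two h2 hw (by norm_num [hS])
  · rw [show -32 * (A - B) * (B - C) * (C - A) = 2 ^ 5 * -((A - B) * (B - C) * (C - A)) by ring]
    exact pow_add_dvd_pow_mul_and_not_dvd h2 5 (k := 0) <| by
      simpa using not_dvd_of_dvd_sub_of_isUnit not_isUnit_two (isUnit_u.pow 3) hP
  · rw [show (16 : OK) = 2 ^ 4 by norm_num]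
    exact pow_add_dvd_pow_mul_and_not_dvd h2 4 (k := 0) <| by
      simpa using not_dvd_of_dvd_sub_of_isUnit not_isUnit_two ((isUnit_u.pow 3).pow 2) hABC2

set_option maxHeartbeats 1000000 in
/-- **Lemma 3 (2.2), computation.** Let `p ≥ 11` be prime and `a, b, c` nonzero
coprime elements of `O_K` with `a^p + b^p + c^p = 0` and `2 ∤ a·b·c`.  With
`A = a^p`, `B = b^p`, `C = c^p`, if `(A, B)` is congruent mod `4·O_K` to one of
`(3, u²)`, `(1, u)`, `(1, u² + 2u)`, then for the valuation `v` attached to the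
prime ideal `2·O_K` (so `v(x) = n` iff `2^n ∣ x` and `2^(n+1) ∤ x`) one has
`v(c₄) = 5`, `v(c₆) = 5` and `v(Δ) = 4`, where `c₄ = 16(A² + AB + B²)`,
`c₆ = -32(A - B)(B - C)(C - A)` and `Δ = 16(ABC)²`. -/
theorem valuations_at_P2_odd_case_two (p : ℕ) (hp : p.Prime) (hp11 : 11 ≤ p)
    (a b c : OK) (ha : a ≠ 0) (hb : b ≠ 0) (hc : c ≠ 0)
    (hcop : ∀ d : OK, d ∣ a → d ∣ b → d ∣ c → IsUnit d)
    (hfermat : a ^ p + b ^ p + c ^ p = 0)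
    (h2abc : ¬ (2 : OK) ∣ a * b * c)
    (A B C : OK) (hA : A = a ^ p) (hB : B = b ^ p) (hC : C = c ^ p)
    (hAB : ((4 : OK) ∣ A - 3 ∧ (4 : OK) ∣ B - u ^ 2) ∨
      ((4 : OK) ∣ A - 1 ∧ (4 : OK) ∣ B - u) ∨
      ((4 : OK) ∣ A - 1 ∧ (4 : OK) ∣ B - (u ^ 2 + 2 * u))) :
    ((2 : OK) ^ 5 ∣ 16 * (A ^ 2 + A * B + B ^ 2) ∧
      ¬ (2 : OK) ^ 6 ∣ 16 * (A ^ 2 + A * B + B ^ 2)) ∧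
    ((2 : OK) ^ 5 ∣ -32 * (A - B) * (B - C) * (C - A) ∧
      ¬ (2 : OK) ^ 6 ∣ -32 * (A - B) * (B - C) * (C - A)) ∧
    ((2 : OK) ^ 4 ∣ 16 * (A * B * C) ^ 2 ∧
      ¬ (2 : OK) ^ 5 ∣ 16 * (A * B * C) ^ 2) :=
  valuations_at_P2_odd_case_two_general p a b c hfermat A B C hA hB hC hAB
end

section
/- The resultant of the polynomials X^10 − 1 and (X+1)^10 − 1 in ℤ[X] equals −3 · 11^9 · 31^3; that is, W_10 = −3 · 11^9 · 31^3. -/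
/-!
Since `X ^ 10 - 1 = Φ₁ Φ₂ Φ₅ Φ₁₀`, `W 10` is the product of the resultants of these cyclotomic
polynomials with `g = (X + 1) ^ 10 - 1`; for `Φ₁` and `Φ₂` they are `g 1 = 1023` and `g (-1) = -1`.
Modulo `Φ₅`, and modulo `Φ₁₀` after multiplication by a power of the unit `X - 1`, `g` is congruent
to a constant times a product of linear polynomials, and the resultant of a monic polynomial with a
linear one is an evaluation.
-/

open Polynomial

/-- The Sylvester matrix of two polynomials `f, g` over `ℤ`, of size
`(g.natDegree + f.natDegree) × (g.natDegree + f.natDegree)`: the first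
`g.natDegree` rows carry the (shifted) coefficients of `f` and the remaining
`f.natDegree` rows carry the (shifted) coefficients of `g`. -/
noncomputable def sylvester (f g : Polynomial ℤ) :
    Matrix (Fin (g.natDegree + f.natDegree)) (Fin (g.natDegree + f.natDegree)) ℤ :=
  Matrix.of fun i j =>
    if (i : ℕ) < g.natDegree then
      if (i : ℕ) ≤ (j : ℕ) ∧ (j : ℕ) ≤ (i : ℕ) + f.natDegree then
        f.coeff (f.natDegree + i - j)
      else 0
    else
      if (i : ℕ) - g.natDegree ≤ (j : ℕ) ∧ (j : ℕ) ≤ (i : ℕ) - g.natDegree + g.natDegree then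
        g.coeff (g.natDegree + ((i : ℕ) - g.natDegree) - j)
      else 0

/-- The resultant of two polynomials over `ℤ`: the determinant of their Sylvester matrix. -/
noncomputable def resultant (f g : Polynomial ℤ) : ℤ := (_root_.sylvester f g).det

/-- `W n` is the resultant of the polynomials `X ^ n - 1` and `(X + 1) ^ n - 1` in `ℤ[X]`. -/
noncomputable def W (n : ℕ) : ℤ := _root_.resultant (X ^ n - 1) ((X + 1) ^ n - 1)

-- `sylvester f g` is `Polynomial.sylvester f g` transposed, with rows and columns in reverse order.
theorem resultant_eq_polynomial_resultant (f g : ℤ[X]) :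
    _root_.resultant f g = f.resultant g := by
  let e : Fin (g.natDegree + f.natDegree) ≃ Fin (f.natDegree + g.natDegree) :=
    (finCongr (add_comm _ _)).trans Fin.revPerm
  rw [_root_.resultant, Polynomial.resultant, ← Matrix.det_transpose,
    ← Matrix.det_submatrix_equiv_self e]
  congr 1
  ext i j
  simp only [_root_.sylvester, Polynomial.sylvester, Fin.addCases, Matrix.submatrix_apply,
    Matrix.transpose_apply, Matrix.of_apply, e, Equiv.trans_apply, finCongr_apply,
    Fin.revPerm_apply, Fin.val_rev, Fin.val_cast, Fin.val_castLT, Fin.val_subNat,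
    eq_rec_constant, Set.mem_Icc]
  split_ifs <;> (try congr 1) <;> omega

namespace Polynomial

variable {R : Type*} [CommRing R]

namespace Monic

variable {f : R[X]}

theorem resultant_of_natDegree_le (hf : f.Monic) {g : R[X]} {n : ℕ} (hn : g.natDegree ≤ n) :
    f.resultant g f.natDegree n = f.resultant g := by
  obtain ⟨k, rfl⟩ := Nat.exists_eq_add_of_le hn
  rw [resultant_add_right_deg _ _ _ _ _ le_rfl, hf.coeff_natDegree, one_pow, one_mul]

theorem resultant_eq_of_dvd_sub (hf : f.Monic) {g h : R[X]} (hgh : f ∣ g - h) :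
    f.resultant g = f.resultant h := by
  obtain ⟨q, hq⟩ := hgh
  set N := g.natDegree + h.natDegree + q.natDegree + f.natDegree
  rw [← hf.resultant_of_natDegree_le (n := N) (by omega),
    ← hf.resultant_of_natDegree_le (g := h) (n := N) (by omega), eq_add_of_sub_eq' hq,
    resultant_add_mul_right _ _ _ _ _ (by omega) le_rfl]

theorem resultant_mul_right (hf : f.Monic) (g₁ g₂ : R[X]) :
    f.resultant (g₁ * g₂) = f.resultant g₁ * f.resultant g₂ := by
  rw [← hf.resultant_of_natDegree_le natDegree_mul_le,
    Polynomial.resultant_mul_right _ _ _ _ le_rfl]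

theorem resultant_pow_right (hf : f.Monic) (g : R[X]) (k : ℕ) :
    f.resultant (g ^ k) = f.resultant g ^ k := by
  induction k with
  | zero => simp
  | succ k ih => rw [pow_succ, hf.resultant_mul_right, ih, pow_succ]

end Monic

variable [Nontrivial R]

theorem resultant_X_pow_sub_one_left {n : ℕ} (hn : 0 < n) (g : R[X]) :
    (X ^ n - 1 : R[X]).resultant g = ∏ d ∈ n.divisors, (cyclotomic d R).resultant g := by
  rw [← prod_cyclotomic_eq_X_pow_sub_one hn, resultant_prod_left _ _ _ _ _ le_rfl]
  simp [(cyclotomic.monic _ R).leadingCoeff]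

theorem resultant_cyclotomic_one_left (g : R[X]) : (cyclotomic 1 R).resultant g = g.eval 1 := by
  rw [cyclotomic_one, ← C_1, natDegree_X_sub_C, resultant_X_sub_C_left _ _ _ le_rfl]

theorem resultant_cyclotomic_two_left (g : R[X]) :
    (cyclotomic 2 R).resultant g = g.eval (-1) := by
  rw [cyclotomic_two, ← C_1, natDegree_X_add_C, resultant_X_add_C_left _ _ _ le_rfl]

end Polynomial

theorem cyclotomic_five_int : cyclotomic 5 ℤ = X ^ 4 + X ^ 3 + X ^ 2 + X + 1 := by
  have : Fact (Nat.Prime 5) := ⟨by norm_num⟩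
  simp only [cyclotomic_prime, Finset.sum_range_succ, Finset.sum_range_zero]
  ring

theorem cyclotomic_ten_int : cyclotomic 10 ℤ = X ^ 4 - X ^ 3 + X ^ 2 - X + 1 := by
  refine mul_right_cancel₀ (cyclotomic_ne_zero 5 ℤ) ?_
  rw [show 10 = 5 * 2 by rfl, ← cyclotomic_expand_eq_cyclotomic_mul Nat.prime_two (by norm_num),
    cyclotomic_five_int]
  simp only [map_add, map_pow, expand_X, map_one]
  ring

theorem natDegree_cyclotomic_five_int : (cyclotomic 5 ℤ).natDegree = 4 := by
  rw [natDegree_cyclotomic, Nat.totient_prime (by norm_num)]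

theorem natDegree_cyclotomic_ten_int : (cyclotomic 10 ℤ).natDegree = 4 := by
  rw [natDegree_cyclotomic]
  decide

-- At a primitive fifth root of unity `ζ`, `u = (ζ + 1) ^ 5` satisfies `u ^ 2 + 11 * u - 1 = 0`.
theorem resultant_cyclotomic_five_X_add_one_pow_ten_sub_one :
    (cyclotomic 5 ℤ).resultant ((X + 1) ^ 10 - 1) = 11 ^ 4 := by
  have hf := cyclotomic.monic 5 ℤ
  rw [hf.resultant_eq_of_dvd_sub (h := C (-11) * (X + C 1) ^ 5)
      ⟨X ^ 6 + 9 * X ^ 5 + 35 * X ^ 4 + 75 * X ^ 3 + 90 * X ^ 2 + 54 * X + 11, by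
        rw [cyclotomic_five_int]; simp only [map_neg, map_ofNat, C_1]; ring⟩,
    hf.resultant_mul_right, hf.resultant_pow_right, resultant_C_right, natDegree_C,
    natDegree_X_add_C, resultant_X_add_C_right _ _ _ le_rfl, natDegree_cyclotomic_five_int,
    cyclotomic_five_int]
  norm_num

theorem resultant_cyclotomic_ten_two_mul_X_add_one :
    (cyclotomic 10 ℤ).resultant (C 2 * X + C 1) = 31 := by
  have hdeg : (C 2 * X + C 1 : ℤ[X]).natDegree = 1 := by compute_degree!
  have hq : (8 * X ^ 3 - 12 * X ^ 2 + 14 * X - 15 : ℤ[X]).natDegree ≤ 3 := by compute_degree!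
  have hdiv : C 16 * cyclotomic 10 ℤ =
      C 31 + (C 2 * X + C 1) * (8 * X ^ 3 - 12 * X ^ 2 + 14 * X - 15) := by
    rw [cyclotomic_ten_int]; simp only [map_ofNat, C_1]; ring
  have hscaled := resultant_C_mul_right (C 2 * X + C 1) (cyclotomic 10 ℤ) (r := 16) (m := 1) (n := 4)
  rw [hdiv, resultant_add_mul_right _ _ _ _ _ (by omega) hdeg.le, resultant_C_right] at hscaled
  rw [resultant_comm, hdeg, natDegree_cyclotomic_ten_int]
  norm_num [coeff_one] at hscaled ⊢
  linarith

-- `X - 1` is a unit modulo `Φ₁₀` (as `Φ₁₀(1) = 1`), and multiplying by its fourth power turns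
-- `(X + 1) ^ 10 - 1` into a product of linear polynomials.
theorem resultant_cyclotomic_ten_X_add_one_pow_ten_sub_one :
    (cyclotomic 10 ℤ).resultant ((X + 1) ^ 10 - 1) = 11 ^ 4 * 31 ^ 2 := by
  have hf := cyclotomic.monic 10 ℤ
  have hX : (cyclotomic 10 ℤ).resultant X = 1 := by
    have h := resultant_X_pow_right (cyclotomic 10 ℤ) _ 1 le_rfl
    rw [pow_one, pow_one] at h
    rw [natDegree_X, h, cyclotomic_coeff_zero _ (by norm_num), natDegree_cyclotomic_ten_int]
    norm_num
  have hX_sub_one : (cyclotomic 10 ℤ).resultant (X - C 1) = 1 := by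
    rw [natDegree_X_sub_C, resultant_X_sub_C_right _ _ _ le_rfl, natDegree_cyclotomic_ten_int,
      cyclotomic_ten_int]
    norm_num
  have hX_add_two : (cyclotomic 10 ℤ).resultant (X + C 2) = 31 := by
    rw [natDegree_X_add_C, resultant_X_add_C_right _ _ _ le_rfl, natDegree_cyclotomic_ten_int,
      cyclotomic_ten_int]
    norm_num
  have hcong := hf.resultant_eq_of_dvd_sub (g := (X - C 1) ^ 4 * ((X + 1) ^ 10 - 1))
    (h := C (-11) * X * (X + C 2) * (C 2 * X + C 1))
    ⟨X ^ 10 + 7 * X ^ 9 + 17 * X ^ 8 + 7 * X ^ 7 - 43 * X ^ 6 - 78 * X ^ 5 - 18 * X ^ 4 +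
      82 * X ^ 3 + 92 * X ^ 2 + 32 * X, by
        rw [cyclotomic_ten_int]; simp only [map_neg, map_ofNat, C_1]; ring⟩
  rw [hf.resultant_mul_right, hf.resultant_pow_right, hX_sub_one, one_pow, one_mul] at hcong
  rw [hcong, hf.resultant_mul_right, hf.resultant_mul_right, hf.resultant_mul_right, hX,
    hX_add_two, resultant_cyclotomic_ten_two_mul_X_add_one, resultant_C_right, natDegree_C,
    natDegree_cyclotomic_ten_int]
  norm_num

/-- The resultant of `X ^ 10 - 1` and `(X + 1) ^ 10 - 1` in `ℤ[X]`. -/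
theorem W_eq_10 : W 10 = (-3 * 11 ^ 9 * 31 ^ 3 : ℤ) := by
  rw [W, resultant_eq_polynomial_resultant, resultant_X_pow_sub_one_left (by norm_num),
    show Nat.divisors 10 = {1, 2, 5, 10} by decide, Finset.prod_insert (by decide),
    Finset.prod_insert (by decide), Finset.prod_insert (by decide), Finset.prod_singleton,
    resultant_cyclotomic_one_left, resultant_cyclotomic_two_left,
    resultant_cyclotomic_five_X_add_one_pow_ten_sub_one,
    resultant_cyclotomic_ten_X_add_one_pow_ten_sub_one]
  norm_num
end

section
/- For every element b of O_K not divisible by 2, there exists a unit ξ of O_K such that ξ·b is a square modulo 4·O_K, i.e. there exists x ∈ O_K with ξ·b ≡ x² (mod 4·O_K). -/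
/-!
Every `b ∈ O_K` prime to `2` is congruent modulo `4` to a unit, so one may even take `x = 1`.
Indeed `O_K / 2` has at most four elements, and the four classes are represented by
`0, -1, φ, -φ²`, where `φ = (1 + √5) / 2` is the golden ratio. These representatives `r` have
unit differences, so they are distinct mod `2`; the nonzero ones are units, and so are the four
elements `1 + 2r = 1, -1, φ³, -φ³`. Writing `b = v (1 + 2c)` with `v` a unit representative of
`b` mod `2`, and choosing `r ≡ c` mod `2`, gives `b ≡ v (1 + 2r)` mod `4`.
-/

open Polynomial

section CommRing

variable {R : Type*} [CommRing R]

theorem exists_dvd_sub_of_nat_card_quotient_le {a : R} [Finite (R ⧸ Ideal.span {a})] {n : ℕ}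
    (hcard : Nat.card (R ⧸ Ideal.span {a}) ≤ n) {r : Fin n → R}
    (hr : Pairwise fun i j ↦ ¬ a ∣ r i - r j) (c : R) : ∃ i, a ∣ c - r i := by
  have hinj : Function.Injective fun i ↦ Ideal.Quotient.mk (Ideal.span {a}) (r i) := by
    intro i j hij
    by_contra hne
    exact hr hne (Ideal.mem_span_singleton.mp (Ideal.Quotient.eq.mp hij))
  obtain ⟨i, hi⟩ := (hinj.bijective_of_nat_card_le (by simpa using hcard)).surjective
    (Ideal.Quotient.mk _ c)
  exact ⟨i, Ideal.mem_span_singleton.mp (Ideal.Quotient.eq.mp hi.symm)⟩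

theorem exists_unit_four_dvd_sub_of_not_two_dvd
    (hodd : ∀ b : R, ¬ 2 ∣ b → ∃ v : Rˣ, 2 ∣ b - v)
    (hres : ∀ c : R, ∃ s : R, 2 ∣ c - s ∧ IsUnit (1 + 2 * s))
    {b : R} (hb : ¬ 2 ∣ b) : ∃ u : Rˣ, 4 ∣ b - u := by
  obtain ⟨v, t, ht⟩ := hodd b hb
  obtain ⟨s, ⟨k, hk⟩, w, hw⟩ := hres (↑v⁻¹ * t)
  refine ⟨v * w, v * k, ?_⟩
  rw [Units.val_mul, hw]
  linear_combination ht + 2 * (v : R) * hk - 2 * t * v.mul_inv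

end CommRing

theorem sqrt_five_mem : √5 ∈ K := IntermediateField.subset_adjoin ℚ {√5} rfl

instance : FiniteDimensional ℚ K :=
  IntermediateField.adjoin.finiteDimensional isIntegral_sqrt_five

instance inst_s17 : NumberField K := ⟨⟩

theorem finrank_le_two : Module.finrank ℚ K ≤ 2 := by
  rw [K, IntermediateField.adjoin.finrank isIntegral_sqrt_five]
  calc (minpoly ℚ √5).natDegree ≤ (X ^ 2 - C 5 : ℚ[X]).natDegree :=
        natDegree_le_of_dvd (minpoly.dvd ℚ _ (by simp)) (X_pow_sub_C_ne_zero two_pos 5)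
    _ = 2 := natDegree_X_pow_sub_C

namespace OK

theorem nat_card_quotient_two :
    Nat.card (OK ⧸ Ideal.span {(2 : OK)}) = 2 ^ Module.finrank ℚ K := by
  rw [← Submodule.cardQuot_apply, ← Ideal.absNorm_apply, ← NumberField.RingOfIntegers.rank]
  exact_mod_cast Ideal.absNorm_span_natCast 2

instance : Finite (OK ⧸ Ideal.span {(2 : OK)}) :=
  Nat.finite_of_card_ne_zero (by simp [nat_card_quotient_two])

theorem not_isUnit_two : ¬ IsUnit (2 : OK) := by
  intro h
  have hcard := nat_card_quotient_two
  rw [Ideal.span_singleton_eq_top.mpr h, Nat.card_unique, eq_comm, Nat.pow_eq_one] at hcard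
  exact Module.finrank_pos.ne' (hcard.resolve_left (by norm_num))

theorem goldenRatio_mem : Real.goldenRatio ∈ K :=
  div_mem (add_mem (one_mem _) sqrt_five_mem) (ofNat_mem _ 2)

theorem isIntegral_goldenRatio : IsIntegral ℤ (⟨Real.goldenRatio, goldenRatio_mem⟩ : K) :=
  ⟨X ^ 2 - X - C 1, by monicity!, by ext; simp [Real.goldenRatio_sq]⟩

noncomputable def goldenRatio : OK := ⟨_, isIntegral_goldenRatio⟩

local notation "φ" => goldenRatio

theorem goldenRatio_sq : φ ^ 2 = φ + 1 := by
  ext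
  exact Real.goldenRatio_sq

theorem goldenRatio_pow_three : φ ^ 3 = 1 + 2 * φ := by
  linear_combination (φ + 1) * goldenRatio_sq

theorem isUnit_goldenRatio : IsUnit φ :=
  .of_mul_eq_one (φ - 1) (by linear_combination goldenRatio_sq)

noncomputable def residue : Fin 4 → OK := ![0, -1, φ, -φ ^ 2]

theorem isUnit_residue_sub_residue {i j : Fin 4} (h : i ≠ j) :
    IsUnit (residue i - residue j) := by
  wlog hlt : j < i generalizing i j with H
  · simpa using (H h.symm (h.lt_or_gt.resolve_right hlt)).neg
  fin_cases i <;> fin_cases j <;> simp [residue, isUnit_goldenRatio] at hlt ⊢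
  · rw [← goldenRatio_sq]
    exact isUnit_goldenRatio.pow 2
  · rw [show -φ ^ 2 + 1 = -φ by linear_combination -goldenRatio_sq]
    exact isUnit_goldenRatio.neg
  · rw [show -φ ^ 2 - φ = -φ ^ 3 by linear_combination φ * goldenRatio_sq]
    exact (isUnit_goldenRatio.pow 3).neg

theorem exists_two_dvd_sub_residue (c : OK) : ∃ i, 2 ∣ c - residue i := by
  refine exists_dvd_sub_of_nat_card_quotient_le ?_ ?_ c
  · rw [nat_card_quotient_two]
    exact Nat.pow_le_pow_right two_pos finrank_le_two
  · exact fun i j hij hdvd ↦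
      not_isUnit_two (isUnit_of_dvd_unit hdvd (isUnit_residue_sub_residue hij))

theorem isUnit_residue {i : Fin 4} (hi : i ≠ 0) : IsUnit (residue i) := by
  simpa [residue] using isUnit_residue_sub_residue hi

theorem isUnit_one_add_two_mul_residue (i : Fin 4) : IsUnit (1 + 2 * residue i) := by
  fin_cases i <;> simp [residue]
  · norm_num
  · rw [← goldenRatio_pow_three]
    exact isUnit_goldenRatio.pow 3
  · rw [show 1 + -(2 * φ ^ 2) = -φ ^ 3 by linear_combination (φ - 1) * goldenRatio_sq]
    exact (isUnit_goldenRatio.pow 3).neg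

theorem exists_unit_four_dvd_sub {b : OK} (hb : ¬ 2 ∣ b) : ∃ u : OKˣ, 4 ∣ b - u := by
  refine exists_unit_four_dvd_sub_of_not_two_dvd (fun b hb ↦ ?_) (fun c ↦ ?_) hb
  · obtain ⟨i, hi⟩ := exists_two_dvd_sub_residue b
    have hi0 : i ≠ 0 := by
      rintro rfl
      exact hb (by simpa [residue] using hi)
    exact ⟨(isUnit_residue hi0).unit, hi⟩
  · obtain ⟨i, hi⟩ := exists_two_dvd_sub_residue c
    exact ⟨residue i, hi, isUnit_one_add_two_mul_residue i⟩

end OK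

/-- For every `b ∈ O_K` not divisible by `2`, there is a unit `ξ` of `O_K` such
that `ξ·b` is a square modulo `4·O_K`. -/
theorem exists_unit_mul_square_mod_four (b : OK) (hb : ¬ (2 : OK) ∣ b) :
    ∃ (ξ : OKˣ) (x : OK), (4 : OK) ∣ (ξ : OK) * b - x ^ 2 := by
  obtain ⟨u, hu⟩ := OK.exists_unit_four_dvd_sub hb
  refine ⟨u⁻¹, 1, ?_⟩
  simpa [mul_sub] using hu.mul_left ↑u⁻¹
end
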